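/- arXiv:1711.08711 — 2 statements merged into one kernel-verified Lean document; each statement's English description precedes it below -/
import Mathlib

section
/- (Gallai–Hasse–Roy–Vitaver) Let G be a finite undirected graph with chromatic number k. Then for every orientation of the edges of G, the resulting directed graph contains a directed path of edge-length at least k − 1. -/
/-!
Fix a maximal acyclic subrelation `r` of the orientation and colour every vertex by the length
of a longest `r`-path leaving it. The colour drops along every arc of `r`; an arc `u → v` of the
orientation outside `r` would close a cycle if added, so `r` has a path from `v` back to `u` and
the colour drops from `v` to `u`. Hence the colouring is proper, and it uses no more colours
than there are vertices on a longest directed path.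
-/

open Relation

namespace Relation

variable {α : Type*} {r : α → α → Prop}

def Acyclic (r : α → α → Prop) : Prop := ∀ a, ¬ TransGen r a a

theorem acyclic_bot : Acyclic (⊥ : α → α → Prop) := fun _ h => by
  obtain ⟨_, h, -⟩ := TransGen.head'_iff.mp h
  exact h

theorem Acyclic.nodup_of_isChain (hr : Acyclic r) {l : List α} (hl : l.IsChain r) : l.Nodup :=
  List.nodup_iff_sublist.mpr fun a ha => hr a <| by
    simpa using (hl.imp fun _ _ => TransGen.single).sublist ha

theorem TransGen.or_of_sup_edge {u v a b : α}
    (h : TransGen (fun x y => r x y ∨ x = u ∧ y = v) a b) :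
    TransGen r a b ∨ ReflTransGen r a u ∧ ReflTransGen r v b := by
  induction h with
  | single h =>
    rcases h with h | ⟨rfl, rfl⟩
    · exact .inl (.single h)
    · exact .inr ⟨.refl, .refl⟩
  | tail _ hstep ih =>
    rcases hstep with h | ⟨rfl, rfl⟩
    · rcases ih with ih | ⟨hau, hvb⟩
      · exact .inl (ih.tail h)
      · exact .inr ⟨hau, hvb.tail h⟩
    · rcases ih with ih | ⟨hau, -⟩
      · exact .inr ⟨ih.to_reflTransGen, .refl⟩
      · exact .inr ⟨hau, .refl⟩

theorem Acyclic.reflTransGen_of_not_acyclic_sup_edge {u v : α} (hr : Acyclic r)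
    (h : ¬ Acyclic fun x y => r x y ∨ x = u ∧ y = v) : ReflTransGen r v u := by
  obtain ⟨w, hw⟩ := not_forall_not.mp h
  rcases hw.or_of_sup_edge with hw | ⟨hwu, hvw⟩
  · exact absurd hw (hr w)
  · exact hvw.trans hwu

theorem exists_acyclic_le_forall_or_reflTransGen [Finite α] (o : α → α → Prop) :
    ∃ r ≤ o, Acyclic r ∧ ∀ a b, o a b → r a b ∨ ReflTransGen r b a := by
  obtain ⟨r, -, ⟨hro, hr⟩, hmax⟩ := Finite.exists_le_maximal
    (p := fun r : α → α → Prop => r ≤ o ∧ Acyclic r) ⟨bot_le, acyclic_bot⟩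
  refine ⟨r, hro, hr, fun a b hab => or_iff_not_imp_left.mpr fun hnab => ?_⟩
  refine hr.reflTransGen_of_not_acyclic_sup_edge fun hacyc => hnab ?_
  refine hmax ⟨fun x y hxy => ?_, hacyc⟩ (fun x y hxy => .inl hxy) a b (.inr ⟨rfl, rfl⟩)
  rcases hxy with hxy | ⟨rfl, rfl⟩
  exacts [hro x y hxy, hab]

section ChainHeight

variable [Fintype α]

variable (r) in
/-- The number of edges of a longest `r`-chain starting at `a`, provided `r` is acyclic
(otherwise chains are unbounded and the search is simply cut off at `card α`). -/
noncomputable def chainHeight (a : α) : ℕ :=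
  open Classical in
  Nat.findGreatest (fun n => ∃ l : List α, (a :: l).IsChain r ∧ l.length = n) (Fintype.card α)

theorem exists_isChain_length_eq_chainHeight (a : α) :
    ∃ l : List α, (a :: l).IsChain r ∧ l.length = chainHeight r a := by
  classical
  unfold chainHeight
  exact Nat.findGreatest_spec (P := fun n => ∃ l : List α, (a :: l).IsChain r ∧ l.length = n)
    (Nat.zero_le _) ⟨[], .singleton a, rfl⟩

theorem Acyclic.length_le_chainHeight (hr : Acyclic r) {a : α} {l : List α}
    (hl : (a :: l).IsChain r) : l.length ≤ chainHeight r a := by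
  have hcard : (a :: l).length ≤ Fintype.card α := (hr.nodup_of_isChain hl).length_le_card
  classical
  unfold chainHeight
  exact Nat.le_findGreatest (P := fun n => ∃ l : List α, (a :: l).IsChain r ∧ l.length = n)
    (by simp only [List.length_cons] at hcard; omega) ⟨l, hl, rfl⟩

theorem Acyclic.chainHeight_lt_of_rel (hr : Acyclic r) {a b : α} (hab : r a b) :
    chainHeight r b < chainHeight r a := by
  obtain ⟨l, hl, hl_len⟩ := exists_isChain_length_eq_chainHeight (r := r) b
  have := hr.length_le_chainHeight (hl.cons_cons hab)
  simp only [List.length_cons] at this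
  omega

theorem Acyclic.chainHeight_lt_of_transGen (hr : Acyclic r) {a b : α} (hab : TransGen r a b) :
    chainHeight r b < chainHeight r a := by
  induction hab with
  | single h => exact hr.chainHeight_lt_of_rel h
  | tail _ h ih => exact (hr.chainHeight_lt_of_rel h).trans ih

theorem exists_fin_coloring_of_forall_length_le {o : α → α → Prop} (ho : ∀ a, ¬ o a a)
    {n : ℕ} (hlen : ∀ l : List α, l.Nodup → l.IsChain o → l.length ≤ n) :
    ∃ f : α → Fin n, ∀ a b, o a b → f a ≠ f b := by
  obtain ⟨r, hro, hr, hclose⟩ := exists_acyclic_le_forall_or_reflTransGen o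
  have hlt (a : α) : chainHeight r a < n := by
    obtain ⟨l, hl, hl_len⟩ := exists_isChain_length_eq_chainHeight (r := r) a
    have := hlen _ (hr.nodup_of_isChain hl) (hl.imp hro)
    simp only [List.length_cons] at this
    omega
  refine ⟨fun a => ⟨chainHeight r a, hlt a⟩, fun a b hab => ?_⟩
  rw [ne_eq, Fin.mk.injEq]
  rcases hclose a b hab with hab' | hba
  · exact (hr.chainHeight_lt_of_rel hab').ne'
  · rcases reflTransGen_iff_eq_or_transGen.mp hba with rfl | hba
    · exact absurd hab (ho a)
    · exact (hr.chainHeight_lt_of_transGen hba).ne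

end ChainHeight

end Relation

/-- Gallai–Hasse–Roy–Vitaver: if `G` is a finite undirected graph with chromatic number `k`,
then for every orientation `o` of the edges of `G`, the resulting directed graph contains a
directed path of edge-length at least `k - 1`, i.e. a list of `k` (or more) distinct
vertices with consecutive directed edges. -/
theorem gallai_hasse_roy_vitaver {V : Type*} [Fintype V] (G : SimpleGraph V) (k : ℕ)
    (hk : G.chromaticNumber = k) (o : V → V → Prop)
    (ho_sub : ∀ u v, o u v → G.Adj u v)
    (ho_orient : ∀ u v, G.Adj u v → (o u v ↔ ¬ o v u)) :
    ∃ l : List V, l.Nodup ∧ l.Chain' o ∧ k ≤ l.length := by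
  by_contra! hshort
  have hk_pos : 0 < k := by simpa using hshort [] List.nodup_nil .nil
  obtain ⟨f, hf⟩ := exists_fin_coloring_of_forall_length_le
    (fun v hv => (ho_sub v v hv).ne rfl) (n := k - 1) fun l hl hlo => by
      have := hshort l hl hlo
      omega
  have hcol : G.Colorable (k - 1) := ⟨.mk f fun {u v} huv => by
    by_cases huv' : o u v
    · exact hf u v huv'
    · exact (hf v u ((ho_orient v u huv.symm).mpr huv')).symm⟩
  have := hcol.chromaticNumber_le
  rw [hk, Nat.cast_le] at this
  omega
end

section
/- For any edge-colouring c : E(K↔_n) → [r+1] of the finite complete symmetric digraph on n vertices such that there is no monochromatic directed path of edge-length ℓ_i in colour i for any i ∈ [r], the vertex set of K↔_n can be covered by ∏_{i≤r} ℓ_i pairwise vertex-disjoint monochromatic directed paths in colour r+1. -/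
/-!
For each colour `i ≤ r`, the colour-`i` digraph has no path with `ℓ i` edges, so by the
Gallai–Roy theorem its vertices admit a proper labelling by `Fin (ℓ i)`: take a maximal acyclic
subdigraph and label every vertex by the length of the longest path of that subdigraph ending
there. Edges of the subdigraph strictly increase the label, and any other edge `u → v` closes a
cycle with a path `v ⇝ u`, so again the labels differ. Two distinct vertices with the same
labels for all `i` are joined in both directions by edges of colour `r+1` only, so the classes of
the `∏ i, ℓ i` label vectors are colour-`(r+1)` paths in any order.
-/

/-- `l` is a finite directed path (a list of distinct vertices, with consecutive edges),
monochromatic in colour `j`, in the complete symmetric digraph on `V` edge-coloured by `c`.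
Its edge-length is `l.length - 1`. -/
def IsMonoPathList {V : Type*} {N : ℕ} (c : V → V → Fin N) (j : Fin N) (l : List V) : Prop :=
  l.Nodup ∧ l.Chain' fun u v => c u v = j

/-- `S` is the vertex set of a (finite or one-way infinite) directed path, monochromatic in
colour `j`, in the complete symmetric digraph on `V` edge-coloured by `c`. -/
def IsMonoPathSet {V : Type*} {N : ℕ} (c : V → V → Fin N) (j : Fin N) (S : Set V) : Prop :=
  (∃ l : List V, IsMonoPathList c j l ∧ S = {x | x ∈ l}) ∨
  (∃ f : ℕ → V, Function.Injective f ∧ (∀ n, c (f n) (f (n + 1)) = j) ∧ S = Set.range f)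

open Relation

section LongestPath

variable {V : Type*} {R : V → V → Prop}

lemma List.IsChain.reflTransGen_of_mem_concat {l : List V} {u x : V}
    (hc : (l ++ [u]).IsChain R) (hx : x ∈ l ++ [u]) : ReflTransGen R x u := by
  rcases List.mem_append.1 hx with hx | hx
  · exact hc.backwards_concat_induction (ReflTransGen R · u) l (fun _ _ h h' => h'.head h)
      .refl x hx
  · rw [List.mem_singleton.1 hx]

lemma transGen_sup_edge {u v a b : V}
    (h : TransGen (fun x y => R x y ∨ (x = u ∧ y = v)) a b) :
    TransGen R a b ∨ (ReflTransGen R a u ∧ ReflTransGen R v b) := by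
  induction h with
  | single h =>
    rcases h with h | ⟨rfl, rfl⟩
    · exact .inl (.single h)
    · exact .inr ⟨.refl, .refl⟩
  | tail _ h ih =>
    rcases h with h | ⟨rfl, rfl⟩
    · exact ih.imp (·.tail h) fun ⟨hau, hvb⟩ => ⟨hau, hvb.tail h⟩
    · exact .inr ⟨ih.elim TransGen.to_reflTransGen (·.1), .refl⟩

def pathLengthsTo (R : V → V → Prop) (v : V) : Set ℕ :=
  {m | ∃ l : List V, (l ++ [v]).Nodup ∧ (l ++ [v]).IsChain R ∧ l.length = m}

variable [Fintype V]

lemma bddAbove_pathLengthsTo (R : V → V → Prop) (v : V) : BddAbove (pathLengthsTo R v) := by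
  refine ⟨Fintype.card V, fun m ⟨l, hn, _, hm⟩ => ?_⟩
  have := hn.length_le_card
  simp only [List.length_append, List.length_singleton] at this
  omega

noncomputable def longestPathTo (R : V → V → Prop) (v : V) : ℕ :=
  sSup (pathLengthsTo R v)

lemma longestPathTo_mem (R : V → V → Prop) (v : V) :
    longestPathTo R v ∈ pathLengthsTo R v :=
  Nat.sSup_mem ⟨0, [], by simp⟩ (bddAbove_pathLengthsTo R v)

lemma longestPathTo_lt {k : ℕ} (h : ∀ l : List V, l.Nodup → l.IsChain R → l.length ≤ k)
    (v : V) : longestPathTo R v < k := by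
  obtain ⟨l, hn, hc, hl⟩ := longestPathTo_mem R v
  have := h _ hn hc
  simp only [List.length_append, List.length_singleton] at this
  omega

lemma longestPathTo_lt_of_rel (hR : ∀ x, ¬ TransGen R x x) {u v : V} (h : R u v) :
    longestPathTo R u < longestPathTo R v := by
  obtain ⟨l, hn, hc, hl⟩ := longestPathTo_mem R u
  have hv : v ∉ l ++ [u] := fun hv => hR v (.tail' (hc.reflTransGen_of_mem_concat hv) h)
  have hext : longestPathTo R u + 1 ∈ pathLengthsTo R v := by
    refine ⟨l ++ [u], List.concat_eq_append ▸ hn.concat hv, hc.append (.singleton v) ?_, ?_⟩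
    · simpa using h
    · simp [hl]
  exact Nat.lt_of_succ_le (le_csSup (bddAbove_pathLengthsTo R v) hext)

lemma longestPathTo_lt_of_transGen (hR : ∀ x, ¬ TransGen R x x) {u v : V}
    (h : TransGen R u v) : longestPathTo R u < longestPathTo R v := by
  induction h with
  | single h => exact longestPathTo_lt_of_rel hR h
  | tail _ h ih => exact ih.trans (longestPathTo_lt_of_rel hR h)

/-- The Gallai–Roy theorem. -/
theorem exists_fin_coloring_of_forall_length_le {k : ℕ}
    (h : ∀ l : List V, l.Nodup → l.IsChain R → l.length ≤ k) :
    ∃ g : V → Fin k, ∀ u v, u ≠ v → R u v → g u ≠ g v := by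
  obtain ⟨E, ⟨hER, hE⟩, hmax⟩ := Set.toFinite
    {E : V → V → Prop | E ≤ R ∧ ∀ x, ¬ TransGen E x x} |>.exists_maximal
    ⟨⊥, bot_le, fun x hx => by obtain ⟨_, h, _⟩ := TransGen.head'_iff.1 hx; exact h⟩
  have hEk : ∀ l : List V, l.Nodup → l.IsChain E → l.length ≤ k := fun l hn hc =>
    h l hn (hc.imp hER)
  refine ⟨fun v => ⟨longestPathTo E v, longestPathTo_lt hEk v⟩, fun u v huv huvR => ?_⟩
  rw [ne_eq, Fin.mk.injEq]
  by_cases huvE : E u v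
  · exact (longestPathTo_lt_of_rel hE huvE).ne
  obtain ⟨x, hx⟩ : ∃ x, TransGen (fun x y => E x y ∨ (x = u ∧ y = v)) x x := by
    by_contra! hacyc
    have hle : (fun x y => E x y ∨ (x = u ∧ y = v)) ≤ R := fun x y h =>
      h.elim (hER x y) fun ⟨hx, hy⟩ => hx ▸ hy ▸ huvR
    exact huvE (hmax ⟨hle, hacyc⟩ (fun _ _ => .inl) u v (.inr ⟨rfl, rfl⟩))
  rcases transGen_sup_edge hx with hxx | ⟨hxu, hvx⟩
  · exact absurd hxx (hE x)
  rcases reflTransGen_iff_eq_or_transGen.1 (hvx.trans hxu) with rfl | hvu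
  · exact absurd rfl huv
  · exact (longestPathTo_lt_of_transGen hE hvu).ne'

end LongestPath

section MonoPath

variable {V : Type*} {N : ℕ} {c : V → V → Fin N} {j : Fin N}

lemma IsMonoPathList.length_le {k : ℕ}
    (h : ¬ ∃ l : List V, IsMonoPathList c j l ∧ l.length = k + 1) {l : List V}
    (hl : IsMonoPathList c j l) : l.length ≤ k :=
  not_lt.1 fun hlt => h ⟨l.take (k + 1),
    ⟨(l.take_sublist _).nodup hl.1, List.IsChain.take hl.2 _⟩, by simp; omega⟩

lemma isMonoPathSet_of_pairwise {S : Set V} (hS : S.Finite)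
    (h : S.Pairwise fun a b => c a b = j) : IsMonoPathSet c j S := by
  refine .inl ⟨hS.toFinset.toList, ⟨hS.toFinset.nodup_toList, ?_⟩, by ext; simp⟩
  refine List.Pairwise.isChain (hS.toFinset.nodup_toList.imp_of_mem fun ha hb hab => ?_)
  exact h (by simpa using ha) (by simpa using hb) hab

end MonoPath

theorem decomposition_finite_general (n r : ℕ) (c : Fin n → Fin n → Fin (r + 1))
    (ℓ : Fin r → ℕ)
    (hno : ∀ i : Fin r,
      ¬ ∃ l : List (Fin n), IsMonoPathList c i.castSucc l ∧ l.length = ℓ i + 1) :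
    ∃ P : Fin (∏ i, ℓ i) → Set (Fin n),
      (∀ k, IsMonoPathSet c (Fin.last r) (P k)) ∧
      (Pairwise fun a b => Disjoint (P a) (P b)) ∧
      (⋃ k, P k) = Set.univ := by
  have hcol (i : Fin r) :
      ∃ g : Fin n → Fin (ℓ i), ∀ u v, u ≠ v → c u v = i.castSucc → g u ≠ g v :=
    exists_fin_coloring_of_forall_length_le fun _ hn hc =>
      IsMonoPathList.length_le (hno i) ⟨hn, hc⟩
  choose g hg using hcol
  let F : Fin n → Fin (∏ i, ℓ i) := fun v => finPiFinEquiv fun i => g i v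
  refine ⟨fun k => F ⁻¹' {k}, fun k => isMonoPathSet_of_pairwise (Set.toFinite _) ?_,
    fun a b hab => (Set.disjoint_singleton.2 hab).preimage F,
    Set.iUnion_eq_univ_iff.2 fun v => ⟨F v, rfl⟩⟩
  intro u hu v hv huv
  obtain ⟨i, hi⟩ | hlast := (c u v).eq_castSucc_or_eq_last
  · exact absurd (congrFun (finPiFinEquiv.injective (hu.trans hv.symm)) i) (hg i u v huv hi)
  · exact hlast

/-- For any `(r+1)`-edge-colouring of the finite complete symmetric digraph on `n` vertices
with no monochromatic directed path of edge-length `ℓ i` in colour `i` for any `i ∈ [r]`,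
the vertex set can be covered by `∏ i, ℓ i` pairwise disjoint monochromatic directed paths
in colour `r+1`. -/
theorem decomposition_finite (n r : ℕ) (c : Fin n → Fin n → Fin (r + 1))
    (ℓ : Fin r → ℕ) (hℓ : ∀ i, 0 < ℓ i)
    (hno : ∀ i : Fin r,
      ¬ ∃ l : List (Fin n), IsMonoPathList c i.castSucc l ∧ l.length = ℓ i + 1) :
    ∃ P : Fin (∏ i, ℓ i) → Set (Fin n),
      (∀ k, IsMonoPathSet c (Fin.last r) (P k)) ∧
      (Pairwise fun a b => Disjoint (P a) (P b)) ∧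
      (⋃ k, P k) = Set.univ :=
  decomposition_finite_general n r c ℓ hno
end
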